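/- arXiv:1503.02189 — 2 statements merged into one kernel-verified Lean document; each statement's English description precedes it below -/
import Mathlib

section
/- Let m be a positive natural number, let (Uᵢ : i ∈ ℕ) be a family of sets each of cardinality at least m, and let U be a set containing ⋃ᵢ Uᵢ. Let R = {s ∈ ℕ → U : ∀i, s(i) ∈ Uᵢ}. Then there exists a partition (Rⱼ : j < m) of R into m nonempty pairwise disjoint parts such that for every i ∈ ℕ and every j < m, the cylindrification Cᵢ(Rⱼ) equals Cᵢ(R), where Cᵢ(X) = {s ∈ ℕ → U : ∃t ∈ X, t agrees with s on all coordinates except possibly i}. -/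
noncomputable section Stmt2Aux

open Classical

def stmt2S (U : Type*) : Setoid (ℕ → U) where
  r s t := {i | s i ≠ t i}.Finite
  iseqv := by
    refine ⟨fun s => by simp, fun {s t} h => h.subset ?_, fun {s t u} h1 h2 => (h1.union h2).subset ?_⟩
    · intro i hi; simp only [Set.mem_setOf_eq] at hi ⊢; exact fun h => hi h.symm
    · intro i hi
      simp only [Set.mem_setOf_eq, Set.mem_union]
      by_contra hc
      push_neg at hc
      exact hi (hc.1.trans hc.2)

def stmt2rep {U : Type*} (s : ℕ → U) : ℕ → U := (@Quotient.mk _ (stmt2S U) s).out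

lemma stmt2rep_diff_finite {U : Type*} (s : ℕ → U) : {k | s k ≠ stmt2rep s k}.Finite :=
  (stmt2S U).symm (@Quotient.mk_out _ (stmt2S U) s)

lemma stmt2rep_eq {U : Type*} {s t : ℕ → U} (h : {k | s k ≠ t k}.Finite) :
    stmt2rep s = stmt2rep t := by
  unfold stmt2rep
  congr 1
  exact Quotient.sound h

def stmt2c {U : Type*} (m : ℕ) (d : ℕ → U → ZMod m) (s : ℕ → U) : ZMod m :=
  ∑ k ∈ (stmt2rep_diff_finite s).toFinset, (d k (s k) - d k (stmt2rep s k))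

lemma stmt2c_eq_sum {U : Type*} (m : ℕ) (d : ℕ → U → ZMod m) (s : ℕ → U)
    (F : Finset ℕ) (hF : (stmt2rep_diff_finite s).toFinset ⊆ F) :
    stmt2c m d s = ∑ k ∈ F, (d k (s k) - d k (stmt2rep s k)) := by
  refine Finset.sum_subset hF ?_
  intro k _ hk
  simp only [Set.Finite.mem_toFinset, Set.mem_setOf_eq, not_not] at hk
  rw [hk, sub_self]

lemma stmt2c_update {U : Type*} (m : ℕ) (d : ℕ → U → ZMod m) {s t : ℕ → U} (i : ℕ)
    (h : ∀ k, k ≠ i → s k = t k) :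
    stmt2c m d t = stmt2c m d s + (d i (t i) - d i (s i)) := by
  have hst : {k | s k ≠ t k}.Finite := by
    refine Set.Finite.subset (Set.finite_singleton i) ?_
    intro k hk
    simp only [Set.mem_setOf_eq] at hk
    by_contra hne
    exact hk (h k hne)
  have hrep : stmt2rep s = stmt2rep t := stmt2rep_eq hst
  set F : Finset ℕ := (stmt2rep_diff_finite s).toFinset ∪ (stmt2rep_diff_finite t).toFinset ∪ {i}
    with hFdef
  have hcs := stmt2c_eq_sum m d s F
    (fun k hk => Finset.mem_union_left _ (Finset.mem_union_left _ hk))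
  have hct := stmt2c_eq_sum m d t F
    (fun k hk => Finset.mem_union_left _ (Finset.mem_union_right _ hk))
  have key : stmt2c m d t - stmt2c m d s = d i (t i) - d i (s i) := by
    rw [hcs, hct, hrep, ← Finset.sum_sub_distrib]
    have : ∀ k ∈ F, (d k (t k) - d k (stmt2rep t k) - (d k (s k) - d k (stmt2rep t k)))
        = if k = i then d i (t i) - d i (s i) else 0 := by
      intro k _
      by_cases hk : k = i
      · subst hk; simp [sub_sub_sub_cancel_right]
      · rw [if_neg hk, h k hk]; ring
    rw [Finset.sum_congr rfl this, Finset.sum_ite_eq' F i (fun _ => d i (t i) - d i (s i))]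
    rw [if_pos (by simp [hFdef])]
  linear_combination key

end Stmt2Aux

/-- Andréka's splitting lemma. The box relation `R = Π Uᵢ` (over sets
each of size ≥ m) can be partitioned into m nonempty pairwise disjoint parts, each
cylindrically indistinguishable from R. -/
theorem stmt_2 (m : ℕ) (hm : 0 < m) (U : Type*) (Ui : ℕ → Set U)
    (hcard : ∀ i : ℕ, ∃ g : Fin m → U, Function.Injective g ∧ ∀ j, g j ∈ Ui i) :
    ∃ Rj : Fin m → Set (ℕ → U),
      (∀ j, (Rj j).Nonempty) ∧
      (Pairwise fun j₁ j₂ => Disjoint (Rj j₁) (Rj j₂)) ∧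
      (⋃ j, Rj j) = {s : ℕ → U | ∀ i, s i ∈ Ui i} ∧
      (∀ (i : ℕ) (j : Fin m),
        {s : ℕ → U | ∃ t ∈ Rj j, ∀ k, k ≠ i → t k = s k} =
        {s : ℕ → U | ∃ t ∈ {u : ℕ → U | ∀ i', u i' ∈ Ui i'}, ∀ k, k ≠ i → t k = s k}) := by
  classical
  haveI : NeZero m := ⟨hm.ne'⟩
  choose g hginj hgmem using hcard
  -- digit function
  set d : ℕ → U → ZMod m := fun i u =>
    if h : ∃ j : Fin m, g i j = u then (((h.choose : Fin m) : ℕ) : ZMod m) else 0 with hd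
  have hdg : ∀ i (j : Fin m), d i (g i j) = ((j : ℕ) : ZMod m) := by
    intro i j
    have h : ∃ j' : Fin m, g i j' = g i j := ⟨j, rfl⟩
    simp only [hd, dif_pos h]
    rw [hginj i h.choose_spec]
  have hdsurj : ∀ i (z : ZMod m), ∃ u, u ∈ Ui i ∧ d i u = z := by
    intro i z
    refine ⟨g i ⟨z.val, z.val_lt⟩, hgmem i _, ?_⟩
    rw [hdg]
    exact ZMod.natCast_rightInverse z
  set c : (ℕ → U) → ZMod m := stmt2c m d with hc
  -- key: can realize any color by changing coordinate i, keeping membership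
  have key : ∀ (s : ℕ → U) (i : ℕ) (z : ZMod m), (∀ k, k ≠ i → s k ∈ Ui k) →
      ∃ t : ℕ → U, (∀ k, t k ∈ Ui k) ∧ (∀ k, k ≠ i → t k = s k) ∧ c t = z := by
    intro s i z hs
    obtain ⟨u, hu, hdu⟩ := hdsurj i (z - c s + d i (s i))
    refine ⟨Function.update s i u, ?_, ?_, ?_⟩
    · intro k
      by_cases hk : k = i
      · subst hk; simpa using hu
      · rw [Function.update_of_ne hk]; exact hs k hk
    · intro k hk; rw [Function.update_of_ne hk]
    · have := stmt2c_update m d (s := s) (t := Function.update s i u) i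
        (fun k hk => (Function.update_of_ne hk u s).symm)
      rw [hc, this, Function.update_self, hdu]
      ring
  refine ⟨fun j => {s | (∀ i, s i ∈ Ui i) ∧ c s = ((j : ℕ) : ZMod m)}, ?_, ?_, ?_, ?_⟩
  · intro j
    obtain ⟨t, ht1, _, ht3⟩ := key (fun i => g i 0) 0 ((j : ℕ) : ZMod m)
      (fun k _ => hgmem k 0)
    exact ⟨t, ht1, ht3⟩
  · intro j₁ j₂ hj
    refine Set.disjoint_left.mpr ?_
    rintro s ⟨_, h1⟩ ⟨_, h2⟩
    apply hj
    have : ((j₁ : ℕ) : ZMod m) = ((j₂ : ℕ) : ZMod m) := h1 ▸ h2 ▸ rfl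
    have hv := congrArg ZMod.val this
    rw [ZMod.val_cast_of_lt j₁.isLt, ZMod.val_cast_of_lt j₂.isLt] at hv
    exact Fin.val_injective hv
  · ext s
    simp only [Set.mem_iUnion, Set.mem_setOf_eq]
    constructor
    · rintro ⟨j, hj, _⟩; exact hj
    · intro hs
      refine ⟨⟨(c s).val, (c s).val_lt⟩, hs, ?_⟩
      exact (ZMod.natCast_rightInverse (c s)).symm
  · intro i j
    ext s
    simp only [Set.mem_setOf_eq]
    constructor
    · rintro ⟨t, ⟨ht1, _⟩, ht2⟩
      exact ⟨t, ht1, ht2⟩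
    · rintro ⟨t, ht1, ht2⟩
      have hs : ∀ k, k ≠ i → s k ∈ Ui k := fun k hk => (ht2 k hk) ▸ ht1 k
      obtain ⟨t', h1, h2, h3⟩ := key s i ((j : ℕ) : ZMod m) hs
      exact ⟨t', ⟨h1, h3⟩, h2⟩
end

section
/- Let w be a finite word over the alphabet {s_i^j : i, j < m} ∪ {c_i : i < m} ('sc-words'). Define the induced partial map ŵ : m ⇀ m recursively by: ε̂ = id; (w s_i^j)^ = ŵ ∘ [i|j], where [i|j] is the map sending i to j and fixing all other points; (w c_i)^ = ŵ restricted to m ∖ {i}. Then for every partial map f : m ⇀ m whose domain has size at most m−2, there exists an sc-word w with ŵ = f. -/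
def scHat (m : ℕ) (w : List ((Fin m × Fin m) ⊕ Fin m)) : Fin m → Option (Fin m) :=
  w.foldl
    (fun f sym =>
      match sym with
      | Sum.inl (i, j) => fun x => f (if x = i then j else x)
      | Sum.inr i => fun x => if x = i then none else f x)
    (fun x => some x)

lemma scHat_snoc_inl (m : ℕ) (w : List ((Fin m × Fin m) ⊕ Fin m)) (i j : Fin m) :
    scHat m (w ++ [Sum.inl (i, j)]) = fun x => scHat m w (if x = i then j else x) := by
  unfold scHat; rw [List.foldl_append]; rfl

lemma scHat_snoc_inr (m : ℕ) (w : List ((Fin m × Fin m) ⊕ Fin m)) (i : Fin m) :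
    scHat m (w ++ [Sum.inr i]) = fun x => if x = i then none else scHat m w x := by
  unfold scHat; rw [List.foldl_append]; rfl

/-- Measure: (m+1) * (number of non-fixed points) + (size of domain). -/
def scMu (m : ℕ) (f : Fin m → Option (Fin m)) : ℕ :=
  (m + 1) * (Finset.univ.filter fun u => f u ≠ some u).card
    + (Finset.univ.filter fun u => (f u).isSome).card

lemma scKey (m : ℕ) : ∀ (k : ℕ) (f : Fin m → Option (Fin m)) (z₁ z₂ : Fin m),
    z₁ ≠ z₂ → (∀ u, f u ≠ some z₁) → (∀ u, f u ≠ some z₂) →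
    scMu m f < k → ∃ w, scHat m w = f := by
  intro k
  induction k with
  | zero => intro f z₁ z₂ _ _ _ h; omega
  | succ k ih =>
    intro f z₁ z₂ hz hv₁ hv₂ hμ
    have hm : 0 < m := z₁.pos
    by_cases hb : ∀ u, u ≠ z₁ → u ≠ z₂ → f u = some u
    · -- BASE: f is the identity off {z₁, z₂}
      rcases h1 : f z₁ with _ | v₁ <;> rcases h2 : f z₂ with _ | v₂
      · have e : scHat m [Sum.inr z₁, Sum.inr z₂]
            = fun u => if u = z₂ then none else if u = z₁ then none else some u := rfl
        refine ⟨[Sum.inr z₁, Sum.inr z₂], ?_⟩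
        rw [e]; funext u
        by_cases hu2 : u = z₂
        · simp only [if_pos hu2]; rw [hu2]; exact h2.symm
        · simp only [if_neg hu2]
          by_cases hu1 : u = z₁
          · simp only [if_pos hu1]; rw [hu1]; exact h1.symm
          · simp only [if_neg hu1]; exact (hb u hu1 hu2).symm
      · have hv2z1 : v₂ ≠ z₁ := fun h => hv₁ z₂ (h ▸ h2)
        have e : scHat m [Sum.inr z₁, Sum.inl (z₂, v₂)]
            = fun u => if (if u = z₂ then v₂ else u) = z₁ then none
                else some (if u = z₂ then v₂ else u) := rfl
        refine ⟨[Sum.inr z₁, Sum.inl (z₂, v₂)], ?_⟩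
        rw [e]; funext u
        by_cases hu2 : u = z₂
        · simp only [if_pos hu2, if_neg hv2z1]; rw [hu2]; exact h2.symm
        · simp only [if_neg hu2]
          by_cases hu1 : u = z₁
          · simp only [if_pos hu1]; rw [hu1]; exact h1.symm
          · simp only [if_neg hu1]; exact (hb u hu1 hu2).symm
      · have e : scHat m [Sum.inl (z₁, v₁), Sum.inr z₂]
            = fun u => if u = z₂ then none else some (if u = z₁ then v₁ else u) := rfl
        refine ⟨[Sum.inl (z₁, v₁), Sum.inr z₂], ?_⟩
        rw [e]; funext u
        by_cases hu2 : u = z₂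
        · simp only [if_pos hu2]; rw [hu2]; exact h2.symm
        · simp only [if_neg hu2]
          by_cases hu1 : u = z₁
          · simp only [if_pos hu1]; rw [hu1]; exact h1.symm
          · simp only [if_neg hu1]; exact (hb u hu1 hu2).symm
      · have hv2z1 : v₂ ≠ z₁ := fun h => hv₁ z₂ (h ▸ h2)
        have e : scHat m [Sum.inl (z₁, v₁), Sum.inl (z₂, v₂)]
            = fun u => some (if (if u = z₂ then v₂ else u) = z₁ then v₁
                else (if u = z₂ then v₂ else u)) := rfl
        refine ⟨[Sum.inl (z₁, v₁), Sum.inl (z₂, v₂)], ?_⟩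
        rw [e]; funext u
        by_cases hu2 : u = z₂
        · simp only [if_pos hu2, if_neg hv2z1]; rw [hu2]; exact h2.symm
        · simp only [if_neg hu2]
          by_cases hu1 : u = z₁
          · simp only [if_pos hu1]; rw [hu1]; exact h1.symm
          · simp only [if_neg hu1]; exact (hb u hu1 hu2).symm
    · push_neg at hb
      obtain ⟨x₀, hx₀1, hx₀2, hx₀⟩ := hb
      by_cases hII : ∃ x, x ≠ z₁ ∧ x ≠ z₂ ∧ f x = none
      · -- MOVE II: turn a missing point outside the spares into a fixed point
        obtain ⟨x, hx1, hx2, hfx⟩ := hII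
        set f' := Function.update f x (some x) with hf'
        have hfu : ∀ u, f' u = if u = x then some x else f u := by
          intro u; simp [hf', Function.update_apply]
        have hN : (Finset.univ.filter fun u => f' u ≠ some u)
            = (Finset.univ.filter fun u => f u ≠ some u).erase x := by
          ext u
          simp only [Finset.mem_filter, Finset.mem_erase, Finset.mem_univ, true_and, hfu]
          by_cases h : u = x <;> simp [h, hfx]
        have hD : (Finset.univ.filter fun u => (f' u).isSome)
            = insert x (Finset.univ.filter fun u => (f u).isSome) := by
          ext u
          simp only [Finset.mem_filter, Finset.mem_insert, Finset.mem_univ, true_and, hfu]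
          by_cases h : u = x <;> simp [h]
        have hxN : x ∈ (Finset.univ.filter fun u => f u ≠ some u) := by simp [hfx]
        have hxD : x ∉ (Finset.univ.filter fun u => (f u).isSome) := by simp [hfx]
        have hμ' : scMu m f' < scMu m f := by
          unfold scMu
          rw [hN, hD, Finset.card_erase_of_mem hxN, Finset.card_insert_of_notMem hxD]
          have hpos : 1 ≤ (Finset.univ.filter fun u => f u ≠ some u).card :=
            Finset.card_pos.mpr ⟨x, hxN⟩
          obtain ⟨n', hn'⟩ : ∃ n', (Finset.univ.filter fun u => f u ≠ some u).card = n' + 1 :=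
            ⟨_, (Nat.succ_pred_eq_of_pos hpos).symm⟩
          rw [hn']
          simp only [Nat.add_sub_cancel, Nat.mul_add, Nat.mul_one]
          omega
        obtain ⟨w', hw'⟩ := ih f' z₁ z₂ hz
          (fun u => by rw [hfu]; split <;> [exact fun h => hx1 (Option.some_injective _ h); exact hv₁ u])
          (fun u => by rw [hfu]; split <;> [exact fun h => hx2 (Option.some_injective _ h); exact hv₂ u])
          (by omega)
        refine ⟨w' ++ [Sum.inr x], ?_⟩
        rw [scHat_snoc_inr, hw']
        funext u
        by_cases h : u = x <;> simp [h, hfx, hfu]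
      · push_neg at hII
        have hx₀some : ∃ y₀, f x₀ = some y₀ := by
          rcases h : f x₀ with _ | y₀
          · exact absurd h (hII x₀ hx₀1 hx₀2)
          · exact ⟨y₀, rfl⟩
        obtain ⟨y₀, hy₀⟩ := hx₀some
        have hy₀x₀ : y₀ ≠ x₀ := fun h => hx₀ (h ▸ hy₀)
        have hy₀z1 : y₀ ≠ z₁ := fun h => hv₁ x₀ (h ▸ hy₀)
        have hy₀z2 : y₀ ≠ z₂ := fun h => hv₂ x₀ (h ▸ hy₀)
        by_cases hI : ∃ x t, x ≠ t ∧ f x = f t ∧ f x ≠ none ∧ f x ≠ some x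
        · -- MOVE I: value of x is duplicated at t; drop x from the domain
          obtain ⟨x, t, hxt, hfxt, hfxn, hfxx⟩ := hI
          set f' := Function.update f x none with hf'
          have hfu : ∀ u, f' u = if u = x then none else f u := by
            intro u; simp [hf', Function.update_apply]
          have hN : (Finset.univ.filter fun u => f' u ≠ some u)
              = (Finset.univ.filter fun u => f u ≠ some u) := by
            ext u
            simp only [Finset.mem_filter, Finset.mem_univ, true_and, hfu]
            by_cases h : u = x <;> simp [h, hfxx]
          have hxD : x ∈ (Finset.univ.filter fun u => (f u).isSome) := by
            simp [Option.isSome_iff_ne_none, hfxn]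
          have hD : (Finset.univ.filter fun u => (f' u).isSome)
              = (Finset.univ.filter fun u => (f u).isSome).erase x := by
            ext u
            simp only [Finset.mem_filter, Finset.mem_erase, Finset.mem_univ, true_and, hfu]
            by_cases h : u = x <;> simp [h]
          have hμ' : scMu m f' < scMu m f := by
            unfold scMu
            rw [hN, hD, Finset.card_erase_of_mem hxD]
            have hpos : 1 ≤ (Finset.univ.filter fun u => (f u).isSome).card :=
              Finset.card_pos.mpr ⟨x, hxD⟩
            omega
          obtain ⟨w', hw'⟩ := ih f' z₁ z₂ hz
            (fun u => by rw [hfu]; split <;> [exact fun h => (by simp at h); exact hv₁ u])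
            (fun u => by rw [hfu]; split <;> [exact fun h => (by simp at h); exact hv₂ u])
            (by omega)
          refine ⟨w' ++ [Sum.inl (x, t)], funext fun u => ?_⟩
          simp only [scHat_snoc_inl, hw']
          by_cases h : u = x
          · rw [if_pos h, hfu, if_neg (Ne.symm hxt), h]
            exact hfxt.symm
          · rw [if_neg h, hfu, if_neg h]
        · -- Now spares: if one of them is empty, use it as a buffer (MOVE III)
          have move3 : ∀ za zb : Fin m, za ≠ zb → (∀ u, f u ≠ some za) →
              (∀ u, f u ≠ some zb) → f za = none → x₀ ≠ za → x₀ ≠ zb →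
              y₀ ≠ za → y₀ ≠ zb → ∃ w, scHat m w = f := by
            intro za zb hab hva hvb hfza hxa hxb hya hyb
            set f' := Function.update (Function.update f x₀ (some x₀)) za (some y₀) with hf'
            have hfu : ∀ u, f' u = if u = za then some y₀ else if u = x₀ then some x₀ else f u := by
              intro u; simp [hf', Function.update_apply]
            have hx₀N : x₀ ∈ (Finset.univ.filter fun u => f u ≠ some u) := by simp [hx₀]
            have hN : (Finset.univ.filter fun u => f' u ≠ some u)
                = (Finset.univ.filter fun u => f u ≠ some u).erase x₀ := by
              ext u
              simp only [Finset.mem_filter, Finset.mem_erase, Finset.mem_univ, true_and, hfu]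
              by_cases h : u = x₀
              · subst h
                rw [if_neg hxa, if_pos rfl]
                simp
              · by_cases h2 : u = za
                · subst h2
                  rw [if_pos rfl]
                  simp [h, hya, hfza]
                · rw [if_neg h2, if_neg h]
                  simp [h]
            have hD : (Finset.univ.filter fun u => (f' u).isSome)
                = insert za (Finset.univ.filter fun u => (f u).isSome) := by
              ext u
              simp only [Finset.mem_filter, Finset.mem_insert, Finset.mem_univ, true_and, hfu]
              by_cases h : u = za
              · simp [h]
              · by_cases h2 : u = x₀
                · subst h2; simp [h, hy₀]
                · simp [h, h2]
            have hzaD : za ∉ (Finset.univ.filter fun u => (f u).isSome) := by simp [hfza]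
            have hμ' : scMu m f' < scMu m f := by
              unfold scMu
              rw [hN, hD, Finset.card_erase_of_mem hx₀N, Finset.card_insert_of_notMem hzaD]
              have hpos : 1 ≤ (Finset.univ.filter fun u => f u ≠ some u).card :=
                Finset.card_pos.mpr ⟨x₀, hx₀N⟩
              obtain ⟨n', hn'⟩ : ∃ n', (Finset.univ.filter fun u => f u ≠ some u).card = n' + 1 :=
                ⟨_, (Nat.succ_pred_eq_of_pos hpos).symm⟩
              rw [hn']
              simp only [Nat.add_sub_cancel, Nat.mul_add, Nat.mul_one]
              omega
            obtain ⟨w', hw'⟩ := ih f' za zb hab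
              (fun u => by
                rw [hfu]; split
                · exact fun h => hya (Option.some_injective _ h)
                · split
                  · exact fun h => hxa (Option.some_injective _ h)
                  · exact hva u)
              (fun u => by
                rw [hfu]; split
                · exact fun h => hyb (Option.some_injective _ h)
                · split
                  · exact fun h => hxb (Option.some_injective _ h)
                  · exact hvb u)
              (by omega)
            refine ⟨(w' ++ [Sum.inl (x₀, za)]) ++ [Sum.inr za], funext fun u => ?_⟩
            simp only [scHat_snoc_inr, scHat_snoc_inl, hw']
            by_cases h : u = za
            · rw [if_pos h, h, hfza]
            · rw [if_neg h]
              by_cases h2 : u = x₀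
              · rw [if_pos h2, hfu, if_pos rfl, h2, hy₀]
              · rw [if_neg h2, hfu, if_neg h, if_neg h2]
          rcases hz₁v : f z₁ with _ | v₁
          · exact move3 z₁ z₂ hz hv₁ hv₂ hz₁v (Ne.symm hx₀1).symm hx₀2 hy₀z1 hy₀z2
          · rcases hz₂v : f z₂ with _ | v₂
            · exact move3 z₂ z₁ hz.symm hv₂ hv₁ hz₂v hx₀2 hx₀1 hy₀z2 hy₀z1
            · -- both spares defined, no MOVE I, no MOVE II: f is total and injective, contradiction
              exfalso
              push_neg at hI
              have htot : ∀ u, (f u).isSome := by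
                intro u
                by_cases h1 : u = z₁
                · simp [h1, hz₁v]
                · by_cases h2 : u = z₂
                  · simp [h2, hz₂v]
                  · rcases h : f u with _ | v
                    · exact absurd h (hII u h1 h2)
                    · simp
              set g : Fin m → Fin m := fun u => (f u).get (htot u) with hg
              have hfg : ∀ u, f u = some (g u) := fun u => (Option.some_get (htot u)).symm
              have hginj : Function.Injective g := by
                intro a b hab
                by_contra hne
                have hfab : f a = f b := by rw [hfg a, hfg b, hab]
                have hfa : f a ≠ none := by rw [hfg a]; simp
                have ha := hI a b hne hfab hfa
                have hb := hI b a (Ne.symm hne) hfab.symm (hfab ▸ hfa)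
                rw [ha, hb] at hfab
                exact hne (Option.some_injective _ hfab)
              have hgsurj : Function.Surjective g :=
                Finite.injective_iff_surjective.mp hginj
              obtain ⟨u, hu⟩ := hgsurj z₁
              exact hv₁ u (by rw [hfg u, hu])

/-- Every partial map f : m ⇀ m whose domain has size at most m − 2
is induced by some sc-word. -/
theorem stmt_18 (m : ℕ) (f : Fin m → Option (Fin m))
    (hdom : (Finset.univ.filter fun x : Fin m => (f x).isSome).card ≤ m - 2) :
    ∃ w : List ((Fin m × Fin m) ⊕ Fin m), scHat m w = f := by
  rcases Nat.lt_or_ge m 2 with hm | hm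
  · interval_cases m
    · exact ⟨[], funext fun x => x.elim0⟩
    · have hnone : ∀ x : Fin 1, f x = none := by
        intro x
        by_contra h
        have hx : x ∈ Finset.univ.filter fun x : Fin 1 => (f x).isSome :=
          Finset.mem_filter.mpr ⟨Finset.mem_univ x, Option.isSome_iff_ne_none.mpr h⟩
        have := Finset.card_pos.mpr ⟨x, hx⟩
        omega
      refine ⟨[Sum.inr 0], funext fun u => ?_⟩
      have hu : u = 0 := Fin.fin_one_eq_zero u
      simp [scHat, hu, hnone]
  · -- m ≥ 2: find two distinct non-values z₁ ≠ z₂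
    set bad : Finset (Fin m) := Finset.univ.filter fun z => ∃ u, f u = some z with hbad
    have hsub : bad ⊆ (Finset.univ.filter fun u => (f u).isSome).image
        (fun u => (f u).getD u) := by
      intro z hzmem
      rw [hbad, Finset.mem_filter] at hzmem
      obtain ⟨-, u, hu⟩ := hzmem
      exact Finset.mem_image.mpr ⟨u, by simp [hu], by simp [hu]⟩
    have hbadcard : bad.card ≤ m - 2 := by
      calc bad.card ≤ _ := Finset.card_le_card hsub
        _ ≤ _ := Finset.card_image_le
        _ ≤ m - 2 := hdom
    set good : Finset (Fin m) := Finset.univ.filter fun z => ∀ u, f u ≠ some z with hgood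
    have hsplit : good.card + bad.card = m := by
      have h1 : bad = Finset.univ \ good := by
        ext z
        simp [hbad, hgood, not_forall]
      have h2 : bad.card = m - good.card := by
        rw [h1, Finset.card_sdiff_of_subset (Finset.subset_univ good)]
        simp
      have h3 : good.card ≤ m := by
        have := Finset.card_le_univ good
        simpa using this
      omega
    have hgoodcard : 1 < good.card := by omega
    obtain ⟨z₁, hz₁mem, z₂, hz₂mem, hz12⟩ := Finset.one_lt_card.mp hgoodcard
    rw [hgood, Finset.mem_filter] at hz₁mem hz₂mem
    exact scKey m (scMu m f + 1) f z₁ z₂ hz12 hz₁mem.2 hz₂mem.2 (Nat.lt_succ_self _)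
end
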